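/- Let F be differentiable and strictly convex on the positive reals, let p_1,…,p_M and q_1,…,q_M be positive reals with each p_i/q_i in the domain of F and Σ_i p_i = Σ_i q_i = S > 0, and suppose ĉ in the domain of F satisfies F'(ĉ) = (1/S) Σ_i q_i F'(p_i/q_i). Then D̂_F(P,Q) = (1/S) Σ_i q_i [(p_i/q_i) F'(p_i/q_i) − F(p_i/q_i)] − [ĉ F'(ĉ) − F(ĉ)] satisfies D̂_F(P,Q) ≥ 0, and D̂_F(P,Q) = 0 if and only if p_i = q_i for all i. -/

import Mathlib

open Finset

/-- Tangent line inequality, strict version. -/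
lemma tangent_lt_aux (D : Set ℝ) (F F' : ℝ → ℝ) (hF : StrictConvexOn ℝ D F)
    (hF' : ∀ x ∈ D, HasDerivAt F (F' x) x) {x y : ℝ} (hx : x ∈ D) (hy : y ∈ D)
    (hxy : x ≠ y) : F x + F' x * (y - x) < F y := by
  rcases hxy.lt_or_gt with h | h
  · have h1 := hF.lt_slope_of_hasDerivAt hx hy h (hF' x hx)
    rw [slope_def_field] at h1
    have h2 : 0 < y - x := by linarith
    rw [lt_div_iff₀ h2] at h1
    nlinarith
  · have h1 := hF.slope_lt_of_hasDerivAt hy hx h (hF' x hx)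
    rw [slope_def_field] at h1
    have h2 : 0 < x - y := by linarith
    rw [div_lt_iff₀ h2] at h1
    nlinarith

lemma tangent_le_aux (D : Set ℝ) (F F' : ℝ → ℝ) (hF : StrictConvexOn ℝ D F)
    (hF' : ∀ x ∈ D, HasDerivAt F (F' x) x) {x y : ℝ} (hx : x ∈ D) (hy : y ∈ D) :
    F x + F' x * (y - x) ≤ F y := by
  by_cases h : x = y
  · subst h; simp
  · exact (tangent_lt_aux D F F' hF hF' hx hy h).le

lemma deriv_strictMono_aux (D : Set ℝ) (F F' : ℝ → ℝ) (hF : StrictConvexOn ℝ D F)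
    (hF' : ∀ x ∈ D, HasDerivAt F (F' x) x) {x y : ℝ} (hx : x ∈ D) (hy : y ∈ D)
    (hxy : x < y) : F' x < F' y :=
  (hF.lt_slope_of_hasDerivAt hx hy hxy (hF' x hx)).trans
    (hF.slope_lt_of_hasDerivAt hx hy hxy (hF' y hy))

lemma deriv_injOn_aux (D : Set ℝ) (F F' : ℝ → ℝ) (hF : StrictConvexOn ℝ D F)
    (hF' : ∀ x ∈ D, HasDerivAt F (F' x) x) {x y : ℝ} (hx : x ∈ D) (hy : y ∈ D)
    (hxy : F' x = F' y) : x = y := by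
  by_contra h
  rcases Ne.lt_or_gt h with h1 | h1
  · exact absurd hxy (deriv_strictMono_aux D F F' hF hF' hx hy h1).ne
  · exact absurd hxy.symm (deriv_strictMono_aux D F F' hF hF' hy hx h1).ne

/-- `D̂_F(P,Q) = (1/S) Σ_i q_i [(p_i/q_i) F'(p_i/q_i) − F(p_i/q_i)] − [ĉ F'(ĉ) − F(ĉ)]`
is nonnegative and vanishes iff `P = Q`, where `F'(ĉ) = (1/S) Σ_i q_i F'(p_i/q_i)`
and `Σ_i p_i = Σ_i q_i = S > 0`. -/
theorem conjugate_f_divergence_properties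
    (D : Set ℝ) (hD : D ⊆ Set.Ioi (0 : ℝ)) (F F' : ℝ → ℝ)
    (hF : StrictConvexOn ℝ D F)
    (hF' : ∀ x ∈ D, HasDerivAt F (F' x) x)
    (M : ℕ) (p q : Fin M → ℝ)
    (hp : ∀ i, 0 < p i) (hq : ∀ i, 0 < q i)
    (hr : ∀ i, p i / q i ∈ D)
    (S : ℝ) (hS : S = ∑ i, q i) (hS0 : 0 < S)
    (hpq : ∑ i, p i = ∑ i, q i)
    (chat : ℝ) (hchatD : chat ∈ D)
    (hchat : F' chat = (1 / S) * ∑ i, q i * F' (p i / q i)) :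
    0 ≤ (1 / S) * (∑ i, q i * ((p i / q i) * F' (p i / q i) - F (p i / q i)))
        - (chat * F' chat - F chat) ∧
      ((1 / S) * (∑ i, q i * ((p i / q i) * F' (p i / q i) - F (p i / q i)))
          - (chat * F' chat - F chat) = 0 ↔ ∀ i, p i = q i) := by
  have hS0' : S ≠ 0 := hS0.ne'
  set r : Fin M → ℝ := fun i => p i / q i with hrdef
  have hq0 : ∀ i, q i ≠ 0 := fun i => (hq i).ne'
  have hqr : ∀ i, q i * r i = p i := fun i => by
    rw [hrdef]; rw [mul_comm, div_mul_cancel₀ _ (hq0 i)]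
  have hsumF' : ∑ i, q i * F' (r i) = S * F' chat := by
    rw [hchat]; field_simp; rfl
  -- rewrite of the divergence as average of tangent gaps
  have hE : (1 / S) * (∑ i, q i * (r i * F' (r i) - F (r i))) - (chat * F' chat - F chat)
      = (1 / S) * ∑ i, q i * (F chat - (F (r i) + F' (r i) * (chat - r i))) := by
    have e1 : ∑ i, q i * (F chat - (F (r i) + F' (r i) * (chat - r i)))
        = (∑ i, q i) * F chat - (∑ i, q i * F (r i))
          - chat * (∑ i, q i * F' (r i)) + ∑ i, q i * (r i * F' (r i)) := by
      rw [Finset.sum_mul, Finset.mul_sum, ← Finset.sum_sub_distrib,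
        ← Finset.sum_sub_distrib, ← Finset.sum_add_distrib]
      congr 1; ext i; ring
    have e2 : ∑ i, q i * (r i * F' (r i) - F (r i))
        = (∑ i, q i * (r i * F' (r i))) - ∑ i, q i * F (r i) := by
      rw [← Finset.sum_sub_distrib]; congr 1; ext i; ring
    rw [e1, e2, hsumF', ← hS]
    field_simp
    ring
  have hterm_nonneg : ∀ i ∈ Finset.univ,
      0 ≤ q i * (F chat - (F (r i) + F' (r i) * (chat - r i))) := by
    intro i _
    have := tangent_le_aux D F F' hF hF' (hr i) hchatD
    have h2 : 0 ≤ F chat - (F (r i) + F' (r i) * (chat - r i)) := by linarith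
    exact mul_nonneg (hq i).le h2
  have hsum_nonneg : 0 ≤ ∑ i, q i * (F chat - (F (r i) + F' (r i) * (chat - r i))) :=
    Finset.sum_nonneg hterm_nonneg
  constructor
  · rw [hE]; positivity
  · rw [hE]
    constructor
    · intro h0
      have hsum0 : ∑ i, q i * (F chat - (F (r i) + F' (r i) * (chat - r i))) = 0 := by
        rcases mul_eq_zero.mp h0 with h | h
        · exact absurd h (by positivity)
        · exact h
      have hterm0 := (Finset.sum_eq_zero_iff_of_nonneg hterm_nonneg).mp hsum0
      have hrc : ∀ i, r i = chat := by
        intro i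
        by_contra hne
        have hlt := tangent_lt_aux D F F' hF hF' (hr i) hchatD hne
        have := hterm0 i (Finset.mem_univ i)
        have hpos : 0 < q i * (F chat - (F (r i) + F' (r i) * (chat - r i))) := by
          have h2 : 0 < F chat - (F (r i) + F' (r i) * (chat - r i)) := by linarith
          exact mul_pos (hq i) h2
        linarith
      have hchat1 : chat = 1 := by
        have hsp : ∑ i, p i = chat * S := by
          rw [hS, Finset.mul_sum]
          congr 1; ext i
          rw [← hqr i, hrc i]; ring
        have : S = chat * S := by rw [← hsp, hpq, hS]
        have := mul_right_cancel₀ hS0' (by linarith : chat * S = 1 * S)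
        linarith
      intro i
      have := hrc i
      rw [hchat1, hrdef] at this
      rwa [div_eq_one_iff_eq (hq0 i)] at this
    · intro hpq'
      have hr1 : ∀ i, r i = 1 := fun i => by
        rw [hrdef]; simp [hpq' i, div_self (hq0 i)]
      have hM : Nonempty (Fin M) := by
        rcases Nat.eq_zero_or_pos M with h | h
        · subst h; simp at hS; rw [hS] at hS0; exact absurd hS0 (lt_irrefl 0)
        · exact ⟨⟨0, h⟩⟩
      obtain ⟨i0⟩ := hM
      have h1D : (1 : ℝ) ∈ D := by have := hr i0; rwa [hpq' i0, div_self (hq0 i0)] at this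
      have hchat1 : chat = 1 := by
        apply deriv_injOn_aux D F F' hF hF' hchatD h1D
        rw [hchat]
        have : ∑ i, q i * F' (p i / q i) = S * F' 1 := by
          rw [hS, Finset.sum_mul]
          congr 1; ext i
          rw [hpq' i, div_self (hq0 i)]
        rw [this]; field_simp
      have : ∑ i, q i * (F chat - (F (r i) + F' (r i) * (chat - r i))) = 0 := by
        apply Finset.sum_eq_zero
        intro i _
        rw [hr1 i, hchat1]
        ring
      rw [this, mul_zero]
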